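/- arXiv:1906.05473 — 3 statements merged into one kernel-verified Lean document; each statement's English description precedes it below -/
import Mathlib

section
/- Let Y be an integrable real-valued random variable whose CDF F is continuous and strictly increasing, and let α ∈ (0,1). For real numbers l ≤ u, define the absolute discrepancy loss of the interval [l,u] at outcome y as ℓ_α([l,u], y) = α(u−l)/2 + (l−y)^+ + (y−u)^+. Then the expected loss E[ℓ_α([l,u], Y)] is minimized over all pairs l ≤ u exactly at the pair with F(l) = α/2 and F(u) = 1 − α/2; that is, the endpoints of the optimal interval are the α/2 and 1−α/2 quantiles of Y, so the optimal interval is a 1−α prediction interval. -/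
/-!
The interval loss splits as `ρ_{α/2}(y - l) + ρ_{1-α/2}(y - u)`, where `ρ_τ(x) = τ x + (-x)⁺` is
the pinball loss, so the expected loss is a sum of a function of `l` and a function of `u`.
The expected pinball loss `a ↦ E ρ_τ(Y - a)` has subgradient `F a - τ` at `a`; as `F` is strictly
increasing and attains `τ`, its minimisers are exactly the points with `F a = τ`. The two
unconstrained minimisers satisfy `l₀ ≤ u₀` because `α / 2 < 1 - α / 2`, so the constraint `l ≤ u`
is inactive.
-/

open MeasureTheory ProbabilityTheory Set

theorem forall_le_iff_eq_zero_of_subgradient {f D : ℝ → ℝ}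
    (hsub : ∀ a b, f a + (b - a) * D a ≤ f b) (hD : StrictMono D) {a₀ : ℝ} (ha₀ : D a₀ = 0)
    (a : ℝ) : (∀ b, f a ≤ f b) ↔ D a = 0 := by
  refine ⟨fun hmin => ?_, fun h b => by simpa [h] using hsub a b⟩
  obtain rfl | hne := eq_or_ne a a₀
  · exact ha₀
  have key : ∀ t, (a - t) * D t ≤ 0 := fun t => by linarith [hsub t a, hmin t]
  -- this fails at any `t` strictly between `a` and `a₀`, where `D t` has the sign of `a - t`
  rcases hne.lt_or_gt with h | h
  · obtain ⟨t, hat, hta₀⟩ := exists_between h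
    nlinarith [key t, ha₀ ▸ hD hta₀]
  · obtain ⟨t, hta₀, hat⟩ := exists_between h
    nlinarith [key t, ha₀ ▸ hD hta₀]

theorem forall_add_le_iff_of_forall_le {ι κ M : Type*} [AddCommMonoid M] [PartialOrder M]
    [IsOrderedCancelAddMonoid M] (r : ι → κ → Prop) {h : ι → M} {g : κ → M} {i₀ : ι} {k₀ : κ}
    (hi₀ : ∀ i, h i₀ ≤ h i) (hk₀ : ∀ k, g k₀ ≤ g k) (hr : r i₀ k₀) (i : ι) (k : κ) :
    (∀ i' k', r i' k' → h i + g k ≤ h i' + g k') ↔ (∀ i', h i ≤ h i') ∧ ∀ k', g k ≤ g k' := by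
  refine ⟨fun H => ?_, fun H i' k' _ => add_le_add (H.1 i') (H.2 k')⟩
  have hi : h i ≤ h i₀ :=
    le_of_add_le_add_right ((H i₀ k₀ hr).trans (add_le_add_right (hk₀ k) _))
  have hk : g k ≤ g k₀ :=
    le_of_add_le_add_left ((H i₀ k₀ hr).trans (add_le_add_left (hi₀ i) _))
  exact ⟨fun i' => hi.trans (hi₀ i'), fun k' => hk.trans (hk₀ k')⟩

theorem exists_cdf_eq (μ : Measure ℝ) [IsProbabilityMeasure μ] (hc : Continuous (cdf μ))
    {τ : ℝ} (hτ : τ ∈ Ioo 0 1) : ∃ a, cdf μ a = τ :=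
  mem_range_of_exists_le_of_exists_ge hc
    ((tendsto_cdf_atBot μ).eventually_le_const hτ.1).exists
    ((tendsto_cdf_atTop μ).eventually_const_le hτ.2).exists

def pinballLoss (τ x : ℝ) : ℝ := τ * x + max (-x) 0

theorem pinballLoss_add_mul_le (τ a b y : ℝ) :
    pinballLoss τ (y - a) + (b - a) * ((Iic a).indicator 1 y - τ) ≤ pinballLoss τ (y - b) := by
  unfold pinballLoss
  by_cases h : y ≤ a
  · simp only [h, indicator_of_mem, mem_Iic, Pi.one_apply]
    have := le_max_left (-(y - b)) 0
    rw [max_eq_left (by linarith : (0:ℝ) ≤ -(y - a))]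
    linarith
  · simp only [h, indicator_of_notMem, mem_Iic, not_false_eq_true]
    have := le_max_right (-(y - b)) 0
    rw [max_eq_right (by linarith : -(y - a) ≤ 0)]
    linarith

theorem intervalLoss_eq_pinballLoss_add (α l u y : ℝ) :
    α * (u - l) / 2 + (max (l - y) 0 + max (y - u) 0) =
      pinballLoss (α / 2) (y - l) + pinballLoss (1 - α / 2) (y - u) := by
  have : max (y - u) 0 = max (u - y) 0 + (y - u) := by
    rcases le_total y u with h | h
    · rw [max_eq_right (by linarith), max_eq_left (by linarith)]; ring
    · rw [max_eq_left (by linarith), max_eq_right (by linarith)]; ring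
  simp only [pinballLoss, neg_sub, this]
  ring

section Risk

variable {Ω : Type*} [MeasurableSpace Ω] {P : Measure Ω} [IsProbabilityMeasure P] {Y : Ω → ℝ}

theorem integrable_pinballLoss (hY : Integrable Y P) (τ a : ℝ) :
    Integrable (fun ω => pinballLoss τ (Y ω - a)) P :=
  ((hY.sub (integrable_const a)).const_mul τ).add (hY.sub (integrable_const a)).neg.pos_part

theorem integral_pinballLoss_add_mul_le (hYm : Measurable Y) (hY : Integrable Y P)
    (τ a b : ℝ) :
    ∫ ω, pinballLoss τ (Y ω - a) ∂P + (b - a) * (cdf (P.map Y) a - τ) ≤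
      ∫ ω, pinballLoss τ (Y ω - b) ∂P := by
  have hind : Integrable (fun ω => (Iic a).indicator (1 : ℝ → ℝ) (Y ω)) P :=
    ((integrable_const 1).indicator measurableSet_Iic).comp_measurable hYm
  have hcdf : ∫ ω, (Iic a).indicator (1 : ℝ → ℝ) (Y ω) ∂P = cdf (P.map Y) a := by
    have := Measure.isProbabilityMeasure_map (μ := P) hYm.aemeasurable
    rw [cdf_eq_real, map_measureReal_apply hYm measurableSet_Iic,
      ← integral_indicator_one (hYm measurableSet_Iic)]
    rfl
  have hslope : Integrable (fun ω => (b - a) * ((Iic a).indicator 1 (Y ω) - τ)) P :=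
    (hind.sub (integrable_const τ)).const_mul _
  calc ∫ ω, pinballLoss τ (Y ω - a) ∂P + (b - a) * (cdf (P.map Y) a - τ)
      = ∫ ω, (pinballLoss τ (Y ω - a) + (b - a) * ((Iic a).indicator 1 (Y ω) - τ)) ∂P := by
        rw [integral_add (integrable_pinballLoss hY τ a) hslope, integral_const_mul,
          integral_sub hind (integrable_const τ), hcdf, integral_const, probReal_univ, one_smul]
    _ ≤ ∫ ω, pinballLoss τ (Y ω - b) ∂P :=
        integral_mono ((integrable_pinballLoss hY τ a).add hslope) (integrable_pinballLoss hY τ b)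
          fun ω => pinballLoss_add_mul_le τ a b (Y ω)

theorem integral_intervalLoss_eq_add (hY : Integrable Y P) (α l u : ℝ) :
    α * (u - l) / 2 + ∫ ω, (max (l - Y ω) 0 + max (Y ω - u) 0) ∂P =
      ∫ ω, pinballLoss (α / 2) (Y ω - l) ∂P + ∫ ω, pinballLoss (1 - α / 2) (Y ω - u) ∂P := by
  have hint : Integrable (fun ω => max (l - Y ω) 0 + max (Y ω - u) 0) P :=
    ((integrable_const l).sub hY).pos_part.add (hY.sub (integrable_const u)).pos_part
  calc _ = ∫ ω, (α * (u - l) / 2 + (max (l - Y ω) 0 + max (Y ω - u) 0)) ∂P := by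
        rw [integral_add (integrable_const _) hint, integral_const, probReal_univ, one_smul]
    _ = _ := by
        simp_rw [intervalLoss_eq_pinballLoss_add]
        exact integral_add (integrable_pinballLoss hY _ l) (integrable_pinballLoss hY _ u)

theorem forall_integral_pinballLoss_le_iff (hYm : Measurable Y) (hY : Integrable Y P)
    (hc : Continuous (cdf (P.map Y))) (hs : StrictMono (cdf (P.map Y))) {τ : ℝ}
    (hτ : τ ∈ Ioo 0 1) (a : ℝ) :
    (∀ b, ∫ ω, pinballLoss τ (Y ω - a) ∂P ≤ ∫ ω, pinballLoss τ (Y ω - b) ∂P) ↔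
      cdf (P.map Y) a = τ := by
  have := Measure.isProbabilityMeasure_map (μ := P) hYm.aemeasurable
  obtain ⟨a₀, ha₀⟩ := exists_cdf_eq _ hc hτ
  rw [← sub_eq_zero]
  exact forall_le_iff_eq_zero_of_subgradient (integral_pinballLoss_add_mul_le hYm hY τ)
    (fun _ _ h => sub_lt_sub_right (hs h) τ) (sub_eq_zero.2 ha₀) a

end Risk

/-- for an integrable real random variable `Y` with continuous strictly
increasing CDF `F` and `α ∈ (0,1)`, the expected absolute-discrepancy interval loss
`E[α(u−l)/2 + (l−Y)⁺ + (Y−u)⁺]` is minimized over pairs `l ≤ u` exactly at the pair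
with `F(l) = α/2` and `F(u) = 1 − α/2`. -/
theorem stmt_3 {Ω : Type*} [MeasurableSpace Ω] (P : Measure Ω) [IsProbabilityMeasure P]
    (Y : Ω → ℝ) (hYm : Measurable Y) (hY : Integrable Y P)
    (F : ℝ → ℝ) (hF : ∀ t, F t = (P {ω | Y ω ≤ t}).toReal)
    (hFc : Continuous F) (hFs : StrictMono F)
    (α : ℝ) (hα : α ∈ Set.Ioo (0 : ℝ) 1) :
    ∀ l u : ℝ, l ≤ u →
      ((∀ l' u' : ℝ, l' ≤ u' →
          α * (u - l) / 2 + ∫ ω, (max (l - Y ω) 0 + max (Y ω - u) 0) ∂P ≤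
          α * (u' - l') / 2 + ∫ ω, (max (l' - Y ω) 0 + max (Y ω - u') 0) ∂P) ↔
        (F l = α / 2 ∧ F u = 1 - α / 2)) := by
  have := Measure.isProbabilityMeasure_map (μ := P) hYm.aemeasurable
  obtain rfl : F = cdf (P.map Y) := funext fun t => by
    rw [hF, cdf_eq_real, map_measureReal_apply hYm measurableSet_Iic]; rfl
  obtain ⟨hα₀, hα₁⟩ := hα
  have hlow : α / 2 ∈ Ioo (0 : ℝ) 1 := ⟨by linarith, by linarith⟩
  have hupp : 1 - α / 2 ∈ Ioo (0 : ℝ) 1 := ⟨by linarith, by linarith⟩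
  obtain ⟨l₀, hl₀⟩ := exists_cdf_eq _ hFc hlow
  obtain ⟨u₀, hu₀⟩ := exists_cdf_eq _ hFc hupp
  have hl₀u₀ : l₀ ≤ u₀ := hFs.le_iff_le.1 (by rw [hl₀, hu₀]; linarith)
  intro l u _
  simp only [integral_intervalLoss_eq_add hY]
  exact (forall_add_le_iff_of_forall_le (· ≤ ·)
      (h := fun l => ∫ ω, pinballLoss (α / 2) (Y ω - l) ∂P)
      (g := fun u => ∫ ω, pinballLoss (1 - α / 2) (Y ω - u) ∂P)
      ((forall_integral_pinballLoss_le_iff hYm hY hFc hFs hlow l₀).2 hl₀)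
      ((forall_integral_pinballLoss_le_iff hYm hY hFc hFs hupp u₀).2 hu₀) hl₀u₀ l u).trans
    (and_congr (forall_integral_pinballLoss_le_iff hYm hY hFc hFs hlow l)
      (forall_integral_pinballLoss_le_iff hYm hY hFc hFs hupp u))
end

section
/- Let Y be a real-valued random variable with density f with respect to Lebesgue measure μ, and let t > 0. Set h* = {y : f(y) > t}. Then μ(h*) ≤ 1/t, and for every Lebesgue-measurable set h ⊆ ℝ with μ(h) < ∞, μ(h) + t^{-1} P(Y ∉ h) ≥ μ(h*) + t^{-1} P(Y ∉ h*); that is, the superlevel set of the density at threshold t minimizes the expected step function loss over measurable sets of finite measure. -/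
/-!
If `ν` has density `f` with respect to `μ`, then
`t * (μ h + t⁻¹ ν hᶜ) = ν univ + ∫ x in h, (t - f x) ∂μ`, and an integral over `h` is minimal
when `h` collects exactly the points where the integrand is negative, i.e. `h = {t < f}`.
The bound `μ {t < f} ≤ ν univ / t` is Markov's inequality.
-/

open MeasureTheory Set

section StepLoss

variable {X : Type*} [MeasurableSpace X]

/-- The expected step-function loss of the set `h` when the outcome has law `ν`. -/
noncomputable def expectedStepLoss (μ ν : Measure X) (t : ℝ) (h : Set X) : ℝ :=
  (μ h).toReal + t⁻¹ * (ν hᶜ).toReal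

theorem setIntegral_neg_le {μ : Measure X} {g : X → ℝ} (hg : Measurable g) {s : Set X}
    (hs : MeasurableSet s) (hneg : IntegrableOn g {x | g x < 0} μ) (hgs : IntegrableOn g s μ) :
    ∫ x in {x | g x < 0}, g x ∂μ ≤ ∫ x in s, g x ∂μ := by
  have hmneg : MeasurableSet {x | g x < 0} := measurableSet_lt hg measurable_const
  rw [← integral_indicator hmneg, ← integral_indicator hs]
  refine integral_mono (hneg.integrable_indicator hmneg) (hgs.integrable_indicator hs) fun x => ?_
  by_cases hx : g x < 0 <;> by_cases hxs : x ∈ s <;>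
    simp [indicator, hx, hxs, le_of_lt, not_lt.mp]

theorem measure_lt_le_withDensity_div {μ : Measure X} {f : X → ℝ} (hfm : Measurable f) {t : ℝ}
    (ht : 0 < t) :
    μ {x | t < f x} ≤ μ.withDensity (fun x => ENNReal.ofReal (f x)) univ / ENNReal.ofReal t := by
  rw [withDensity_apply _ MeasurableSet.univ, Measure.restrict_univ]
  calc μ {x | t < f x} ≤ μ {x | ENNReal.ofReal t ≤ ENNReal.ofReal (f x)} :=
        measure_mono fun x hx => ENNReal.ofReal_le_ofReal (le_of_lt hx)
    _ ≤ _ := meas_ge_le_lintegral_div hfm.ennreal_ofReal.aemeasurable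
        (ENNReal.ofReal_pos.mpr ht).ne' ENNReal.ofReal_ne_top

variable {μ ν : Measure X} {f : X → ℝ}

theorem measureReal_withDensity_ofReal (hfm : Measurable f) (hf0 : ∀ x, 0 ≤ f x) {s : Set X}
    (hs : MeasurableSet s) :
    (μ.withDensity (fun x => ENNReal.ofReal (f x))).real s = ∫ x in s, f x ∂μ := by
  rw [measureReal_def, withDensity_apply _ hs, integral_eq_lintegral_of_nonneg_ae
    (.of_forall hf0) hfm.aestronglyMeasurable]

theorem integrable_of_withDensity_ofReal [IsFiniteMeasure ν]
    (hν : ν = μ.withDensity (fun x => ENNReal.ofReal (f x))) (hfm : Measurable f)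
    (hf0 : ∀ x, 0 ≤ f x) : Integrable f μ := by
  refine ⟨hfm.aestronglyMeasurable, (hasFiniteIntegral_iff_ofReal (.of_forall hf0)).mpr ?_⟩
  simpa [hν] using measure_lt_top ν univ

theorem expectedStepLoss_eq [IsFiniteMeasure ν]
    (hν : ν = μ.withDensity (fun x => ENNReal.ofReal (f x))) (hfm : Measurable f)
    (hf0 : ∀ x, 0 ≤ f x) {t : ℝ} (ht : 0 < t) {s : Set X} (hs : MeasurableSet s)
    (hμs : μ s < ⊤) :
    expectedStepLoss μ ν t s = t⁻¹ * ν.real univ + t⁻¹ * ∫ x in s, (t - f x) ∂μ := by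
  have hfi := integrable_of_withDensity_ofReal hν hfm hf0
  rw [expectedStepLoss, ← measureReal_def, ← measureReal_def, measureReal_compl hs,
    integral_sub (integrableOn_const hμs.ne (C := t)) hfi.integrableOn, setIntegral_const,
    smul_eq_mul, hν, measureReal_withDensity_ofReal hfm hf0 hs]
  field_simp
  ring

theorem expectedStepLoss_superlevelSet_le [IsFiniteMeasure ν]
    (hν : ν = μ.withDensity (fun x => ENNReal.ofReal (f x))) (hfm : Measurable f)
    (hf0 : ∀ x, 0 ≤ f x) {t : ℝ} (ht : 0 < t) {s : Set X} (hs : MeasurableSet s)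
    (hμs : μ s < ⊤) :
    expectedStepLoss μ ν t {x | t < f x} ≤ expectedStepLoss μ ν t s := by
  have hfi := integrable_of_withDensity_ofReal hν hfm hf0
  have hsuper : μ {x | t < f x} < ⊤ :=
    (measure_lt_le_withDensity_div hfm ht).trans_lt
      (ENNReal.div_lt_top (hν ▸ measure_ne_top ν univ) (ENNReal.ofReal_pos.mpr ht).ne')
  have hsuper_eq : {x | t < f x} = {x | t - f x < 0} := by simp only [sub_neg]
  rw [expectedStepLoss_eq hν hfm hf0 ht (measurableSet_lt measurable_const hfm) hsuper,
    expectedStepLoss_eq hν hfm hf0 ht hs hμs, hsuper_eq]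
  gcongr t⁻¹ * _ + t⁻¹ * ?_
  refine setIntegral_neg_le (measurable_const.sub hfm) hs ?_ ?_
  · exact (integrableOn_const (hsuper_eq ▸ hsuper).ne).sub hfi.integrableOn
  · exact (integrableOn_const hμs.ne).sub hfi.integrableOn

end StepLoss

/-- if `Y` has density `f` with respect to Lebesgue measure and `t > 0`,
then the superlevel set `h* = {y : f(y) > t}` has Lebesgue measure at most `1/t`, and it
minimizes the expected step-function loss `μ(h) + t⁻¹ P(Y ∉ h)` over all measurable sets
`h` of finite Lebesgue measure. -/
theorem stmt_7 {Ω : Type*} [MeasurableSpace Ω] (P : Measure Ω) [IsProbabilityMeasure P]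
    (Y : Ω → ℝ) (hYm : Measurable Y)
    (f : ℝ → ℝ) (hfm : Measurable f) (hf0 : ∀ y, 0 ≤ f y)
    (hdens : Measure.map Y P = volume.withDensity (fun y => ENNReal.ofReal (f y)))
    (t : ℝ) (ht : 0 < t) :
    volume {y : ℝ | t < f y} ≤ ENNReal.ofReal (1 / t) ∧
    ∀ h : Set ℝ, MeasurableSet h → volume h < ⊤ →
      (volume {y : ℝ | t < f y}).toReal + t⁻¹ * (P {ω | Y ω ∉ {y : ℝ | t < f y}}).toReal ≤
        (volume h).toReal + t⁻¹ * (P {ω | Y ω ∉ h}).toReal := by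
  have : IsProbabilityMeasure (P.map Y) := Measure.isProbabilityMeasure_map hYm.aemeasurable
  have hloss : ∀ h : Set ℝ, MeasurableSet h →
      (volume h).toReal + t⁻¹ * (P {ω | Y ω ∉ h}).toReal = expectedStepLoss volume (P.map Y) t h :=
    fun h hh => by rw [expectedStepLoss, Measure.map_apply hYm hh.compl]; rfl
  refine ⟨?_, fun h hh hvol => ?_⟩
  · calc volume {y : ℝ | t < f y} ≤ P.map Y univ / ENNReal.ofReal t :=
          hdens ▸ measure_lt_le_withDensity_div hfm ht
      _ = ENNReal.ofReal (1 / t) := by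
          rw [measure_univ, one_div, one_div, ENNReal.ofReal_inv_of_pos ht]
  · rw [hloss _ (measurableSet_lt measurable_const hfm), hloss h hh]
    exact expectedStepLoss_superlevelSet_le hdens hfm hf0 ht hh hvol
end

section
/- Let (X,Y) be random variables and let (ψ_k, h_k), k = 1,…,K, be measurable decision and prediction-set functions with Σ_{k=1}^K E[ψ_k(X)] > 0. Let U, V be independent uniform[0,1] random variables, independent of (X,Y). Define the aggregate probabilistic decision Ψ̂(X) = 1{U < (1/K)Σ_{k=1}^K ψ_k(X)} and let the aggregate probabilistic prediction set Ĥ(X) contain Y with conditional probability w(X,Y) = (Σ_{k=1}^K ψ_k(X))^{-1} Σ_{k=1}^K ψ_k(X) 1{Y ∈ h_k(X)} (taken as 0 when the denominator vanishes), realized as the event {V < w(X,Y)}, independently of Ψ̂ given (X,Y). Then Pr(Y ∈ Ĥ(X) | Ψ̂(X) = 1) = (Σ_{k=1}^K E[ψ_k(X) 1{Y ∈ h_k(X)}]) / (Σ_{k=1}^K E[ψ_k(X)]), which equals the coverage of the uniform mixture of the K selective prediction-set models. -/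
open MeasureTheory ProbabilityTheory

lemma integrable_of_mem_Icc01 {α : Type*} [MeasurableSpace α] (μ : Measure α) [IsFiniteMeasure μ]
    {f : α → ℝ} (hf : Measurable f) (hb : ∀ a, f a ∈ Set.Icc (0 : ℝ) 1) : Integrable f μ := by
  refine ⟨hf.aestronglyMeasurable, ?_⟩
  apply HasFiniteIntegral.of_bounded (C := 1)
  filter_upwards with a
  rw [Real.norm_eq_abs, abs_of_nonneg (hb a).1]
  exact (hb a).2

lemma aux_cond {Ω 𝒳 𝒴 : Type*} [MeasurableSpace Ω] [MeasurableSpace 𝒳] [MeasurableSpace 𝒴]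
    (P : Measure Ω) [IsProbabilityMeasure P]
    (X : Ω → 𝒳) (Y : Ω → 𝒴) (U V : Ω → ℝ)
    (hX : Measurable X) (hY : Measurable Y) (hU : Measurable U) (hV : Measurable V)
    (hUnifU : Measure.map U P = volume.restrict (Set.Icc (0 : ℝ) 1))
    (hUnifV : Measure.map V P = volume.restrict (Set.Icc (0 : ℝ) 1))
    (hIndUV : IndepFun U V P)
    (hInd : IndepFun (fun ω => (U ω, V ω)) (fun ω => (X ω, Y ω)) P)
    (g : 𝒳 → ℝ) (w : 𝒳 × 𝒴 → ℝ) (hgm : Measurable g) (hwm : Measurable w)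
    (hg01 : ∀ x, g x ∈ Set.Icc (0 : ℝ) 1) (hw01 : ∀ q, w q ∈ Set.Icc (0 : ℝ) 1)
    (hpos : 0 < ∫ ω, g (X ω) ∂P) :
    P[{ω | V ω < w (X ω, Y ω)} | {ω | U ω < g (X ω)}] =
      ENNReal.ofReal ((∫ ω, g (X ω) * w (X ω, Y ω) ∂P) / ∫ ω, g (X ω) ∂P) := by
  set μ0 : Measure ℝ := volume.restrict (Set.Icc (0 : ℝ) 1) with hμ0def
  have hμ0prob : IsProbabilityMeasure μ0 := by
    constructor
    rw [hμ0def, Measure.restrict_apply MeasurableSet.univ, Set.univ_inter, Real.volume_Icc]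
    norm_num
  have hIio : ∀ c : ℝ, c ∈ Set.Icc (0 : ℝ) 1 → μ0 (Set.Iio c) = ENNReal.ofReal c := by
    intro c hc
    rw [hμ0def, Measure.restrict_apply measurableSet_Iio]
    have heq : Set.Iio c ∩ Set.Icc 0 1 = Set.Ico 0 c := by
      ext u
      simp only [Set.mem_inter_iff, Set.mem_Iio, Set.mem_Icc, Set.mem_Ico]
      constructor
      · rintro ⟨h1, h2, _⟩; exact ⟨h2, h1⟩
      · rintro ⟨h1, h2⟩; exact ⟨h2, h1, le_trans h2.le hc.2⟩
    rw [heq, Real.volume_Ico, sub_zero]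
  have hXY : Measurable fun ω => (X ω, Y ω) := hX.prodMk hY
  have hUVm : Measurable fun ω => (U ω, V ω) := hU.prodMk hV
  set ν : Measure (𝒳 × 𝒴) := P.map (fun ω => (X ω, Y ω)) with hνdef
  have hνprob : IsProbabilityMeasure ν := Measure.isProbabilityMeasure_map hXY.aemeasurable
  have hUV : P.map (fun ω => (U ω, V ω)) = μ0.prod μ0 := by
    rw [(indepFun_iff_map_prod_eq_prod_map_map hU.aemeasurable hV.aemeasurable).mp hIndUV,
      hUnifU, hUnifV]
  have hTm : Measurable fun ω => ((U ω, V ω), (X ω, Y ω)) := hUVm.prodMk hXY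
  have hT : P.map (fun ω => ((U ω, V ω), (X ω, Y ω))) = (μ0.prod μ0).prod ν := by
    rw [(indepFun_iff_map_prod_eq_prod_map_map hUVm.aemeasurable hXY.aemeasurable).mp hInd, hUV]
  -- the two relevant sets
  set SB : Set ((ℝ × ℝ) × (𝒳 × 𝒴)) := {p | p.1.1 < g p.2.1} with hSBdef
  set SAB : Set ((ℝ × ℝ) × (𝒳 × 𝒴)) := {p | p.1.1 < g p.2.1 ∧ p.1.2 < w p.2} with hSABdef
  have hSBm : MeasurableSet SB :=
    measurableSet_lt (measurable_fst.comp measurable_fst)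
      (hgm.comp (measurable_fst.comp measurable_snd))
  have hSABm : MeasurableSet SAB := by
    exact MeasurableSet.inter hSBm
      (measurableSet_lt (measurable_snd.comp measurable_fst) (hwm.comp measurable_snd))
  -- integrability facts
  have hgw01 : ∀ q : 𝒳 × 𝒴, g q.1 * w q ∈ Set.Icc (0 : ℝ) 1 := fun q =>
    ⟨mul_nonneg (hg01 q.1).1 (hw01 q).1, mul_le_one₀ (hg01 q.1).2 (hw01 q).1 (hw01 q).2⟩
  have hint1 : Integrable (fun q : 𝒳 × 𝒴 => g q.1) ν :=
    integrable_of_mem_Icc01 ν (hgm.comp measurable_fst) fun q => hg01 q.1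
  have hint2 : Integrable (fun q : 𝒳 × 𝒴 => g q.1 * w q) ν :=
    integrable_of_mem_Icc01 ν ((hgm.comp measurable_fst).mul hwm) hgw01
  have hmap1 : ∫ q, g q.1 ∂ν = ∫ ω, g (X ω) ∂P := by
    rw [hνdef]
    exact integral_map hXY.aemeasurable
      (Measurable.aestronglyMeasurable
        (show Measurable fun q : 𝒳 × 𝒴 => g q.1 from hgm.comp measurable_fst))
  have hmap2 : ∫ q, g q.1 * w q ∂ν = ∫ ω, g (X ω) * w (X ω, Y ω) ∂P := by
    rw [hνdef]
    exact integral_map hXY.aemeasurable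
      (Measurable.aestronglyMeasurable
        (show Measurable fun q : 𝒳 × 𝒴 => g q.1 * w q from (hgm.comp measurable_fst).mul hwm))
  -- measure of the conditioning event
  have hB : P {ω | U ω < g (X ω)} = ENNReal.ofReal (∫ ω, g (X ω) ∂P) := by
    have hpre : {ω | U ω < g (X ω)} = (fun ω => ((U ω, V ω), (X ω, Y ω))) ⁻¹' SB := rfl
    rw [hpre, ← Measure.map_apply hTm hSBm, hT, Measure.prod_apply_symm hSBm]
    have hfib : ∀ q : 𝒳 × 𝒴,
        (μ0.prod μ0) ((fun uv : ℝ × ℝ => (uv, q)) ⁻¹' SB) = ENNReal.ofReal (g q.1) := by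
      intro q
      have : ((fun uv : ℝ × ℝ => (uv, q)) ⁻¹' SB) = (Set.Iio (g q.1)) ×ˢ (Set.univ : Set ℝ) := by
        ext uv; simp [hSBdef]
      rw [this, Measure.prod_prod, hIio _ (hg01 q.1), measure_univ, mul_one]
    simp_rw [hfib]
    rw [← ofReal_integral_eq_lintegral_ofReal hint1 (ae_of_all ν fun q => (hg01 q.1).1), hmap1]
  have hBA : P ({ω | U ω < g (X ω)} ∩ {ω | V ω < w (X ω, Y ω)}) =
      ENNReal.ofReal (∫ ω, g (X ω) * w (X ω, Y ω) ∂P) := by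
    have hpre : {ω | U ω < g (X ω)} ∩ {ω | V ω < w (X ω, Y ω)}
        = (fun ω => ((U ω, V ω), (X ω, Y ω))) ⁻¹' SAB := rfl
    rw [hpre, ← Measure.map_apply hTm hSABm, hT, Measure.prod_apply_symm hSABm]
    have hfib : ∀ q : 𝒳 × 𝒴,
        (μ0.prod μ0) ((fun uv : ℝ × ℝ => (uv, q)) ⁻¹' SAB)
          = ENNReal.ofReal (g q.1 * w q) := by
      intro q
      have : ((fun uv : ℝ × ℝ => (uv, q)) ⁻¹' SAB)
          = (Set.Iio (g q.1)) ×ˢ (Set.Iio (w q)) := by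
        ext uv; simp [hSABdef]
      rw [this, Measure.prod_prod, hIio _ (hg01 q.1), hIio _ (hw01 q),
        ← ENNReal.ofReal_mul (hg01 q.1).1]
    simp_rw [hfib]
    rw [← ofReal_integral_eq_lintegral_ofReal hint2 (ae_of_all ν fun q => (hgw01 q).1), hmap2]
  rw [cond_apply (s := {ω | U ω < g (X ω)})
      (show MeasurableSet {ω | U ω < g (X ω)} from
        measurableSet_lt hU (hgm.comp hX)) P, hB, hBA,
    ENNReal.ofReal_div_of_pos hpos, div_eq_mul_inv, mul_comm]

/-- the coverage of the aggregate (uniform mixture) probabilistic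
selective prediction-set model built from `K` models `(ψ_k, h_k)` equals
`(Σ_k E[ψ_k(X) 1{Y ∈ h_k(X)}]) / (Σ_k E[ψ_k(X)])`.  The aggregate decision accepts when
`U < (1/K) Σ_k ψ_k(X)` and the aggregate prediction set contains `Y` when
`V < w(X,Y)` with `w(x,y) = (Σ_k ψ_k(x))⁻¹ Σ_k ψ_k(x) 1{y ∈ h_k(x)}`, where `U, V` are
independent uniform `[0,1]` variables independent of `(X,Y)`. -/
theorem stmt_12 {Ω 𝒳 𝒴 : Type*} [MeasurableSpace Ω] [MeasurableSpace 𝒳] [MeasurableSpace 𝒴]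
    (P : Measure Ω) [IsProbabilityMeasure P]
    (K : ℕ) (hK : 1 ≤ K)
    (X : Ω → 𝒳) (Y : Ω → 𝒴) (U V : Ω → ℝ)
    (hX : Measurable X) (hY : Measurable Y) (hU : Measurable U) (hV : Measurable V)
    -- `U, V` are uniform on `[0,1]`, independent of each other and of `(X, Y)`
    (hUnifU : Measure.map U P = volume.restrict (Set.Icc (0 : ℝ) 1))
    (hUnifV : Measure.map V P = volume.restrict (Set.Icc (0 : ℝ) 1))
    (hIndUV : IndepFun U V P)
    (hInd : IndepFun (fun ω => (U ω, V ω)) (fun ω => (X ω, Y ω)) P)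
    -- the `K` decision and prediction-set functions
    (ψ : Fin K → 𝒳 → ℝ) (hψm : ∀ k, Measurable (ψ k))
    (hψ01 : ∀ k x, ψ k x ∈ Set.Icc (0 : ℝ) 1)
    (h : Fin K → 𝒳 → Set 𝒴) (hhm : ∀ k, MeasurableSet {q : 𝒳 × 𝒴 | q.2 ∈ h k q.1})
    (hpos : 0 < ∑ k, ∫ ω, ψ k (X ω) ∂P) :
    P[{ω | V ω < (∑ k, ψ k (X ω))⁻¹ *
            ∑ k, ψ k (X ω) * Set.indicator (h k (X ω)) (fun _ => (1 : ℝ)) (Y ω)} |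
      {ω | U ω < (K : ℝ)⁻¹ * ∑ k, ψ k (X ω)}] =
      ENNReal.ofReal
        ((∑ k, ∫ ω, ψ k (X ω) * Set.indicator (h k (X ω)) (fun _ => (1 : ℝ)) (Y ω) ∂P) /
          ∑ k, ∫ ω, ψ k (X ω) ∂P) := by
  have hKpos : (0 : ℝ) < (K : ℝ) := by exact_mod_cast hK
  have hKinv_pos : (0 : ℝ) < (K : ℝ)⁻¹ := inv_pos.mpr hKpos
  -- indicator functions, as functions on the product space
  set ind : Fin K → 𝒳 × 𝒴 → ℝ :=
    fun k q => Set.indicator (h k q.1) (fun _ => (1 : ℝ)) q.2 with hinddef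
  have hind_m : ∀ k, Measurable (ind k) := by
    intro k
    have : ind k = Set.indicator {q : 𝒳 × 𝒴 | q.2 ∈ h k q.1} (fun _ => (1 : ℝ)) := by
      funext q
      by_cases hq : q.2 ∈ h k q.1 <;> simp [hinddef, Set.indicator, hq]
    rw [this]
    exact measurable_const.indicator (hhm k)
  have hind01 : ∀ k q, ind k q ∈ Set.Icc (0 : ℝ) 1 := by
    intro k q
    by_cases hq : q.2 ∈ h k q.1 <;> simp [hinddef, Set.indicator, hq]
  -- the functions g and w
  set g : 𝒳 → ℝ := fun x => (K : ℝ)⁻¹ * ∑ k, ψ k x with hgdef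
  set w : 𝒳 × 𝒴 → ℝ := fun q => (∑ k, ψ k q.1)⁻¹ * ∑ k, ψ k q.1 * ind k q with hwdef
  have hsum_m : Measurable fun x => ∑ k, ψ k x :=
    Finset.measurable_sum _ fun k _ => hψm k
  have hgm : Measurable g := measurable_const.mul hsum_m
  have hwm : Measurable w := by
    apply Measurable.mul
    · exact (hsum_m.comp measurable_fst).inv
    · exact Finset.measurable_sum _ fun k _ => ((hψm k).comp measurable_fst).mul (hind_m k)
  have hsum_nonneg : ∀ x, 0 ≤ ∑ k, ψ k x := fun x =>
    Finset.sum_nonneg fun k _ => (hψ01 k x).1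
  have hg01 : ∀ x, g x ∈ Set.Icc (0 : ℝ) 1 := by
    intro x
    constructor
    · exact mul_nonneg hKinv_pos.le (hsum_nonneg x)
    · have hle : ∑ k, ψ k x ≤ (K : ℝ) := by
        calc ∑ k, ψ k x ≤ ∑ _k : Fin K, (1 : ℝ) :=
              Finset.sum_le_sum fun k _ => (hψ01 k x).2
          _ = (K : ℝ) := by simp
      calc (K : ℝ)⁻¹ * ∑ k, ψ k x ≤ (K : ℝ)⁻¹ * (K : ℝ) :=
            mul_le_mul_of_nonneg_left hle hKinv_pos.le
        _ = 1 := inv_mul_cancel₀ hKpos.ne'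
  have hterm_le : ∀ (k : Fin K) (q : 𝒳 × 𝒴), ψ k q.1 * ind k q ≤ ψ k q.1 := by
    intro k q
    calc ψ k q.1 * ind k q ≤ ψ k q.1 * 1 :=
          mul_le_mul_of_nonneg_left (hind01 k q).2 (hψ01 k q.1).1
      _ = ψ k q.1 := mul_one _
  have hterm_nonneg : ∀ (k : Fin K) (q : 𝒳 × 𝒴), 0 ≤ ψ k q.1 * ind k q := fun k q =>
    mul_nonneg (hψ01 k q.1).1 (hind01 k q).1
  have hw01 : ∀ q, w q ∈ Set.Icc (0 : ℝ) 1 := by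
    intro q
    have htnn : 0 ≤ ∑ k, ψ k q.1 * ind k q := Finset.sum_nonneg fun k _ => hterm_nonneg k q
    have hts : ∑ k, ψ k q.1 * ind k q ≤ ∑ k, ψ k q.1 :=
      Finset.sum_le_sum fun k _ => hterm_le k q
    constructor
    · exact mul_nonneg (inv_nonneg.mpr (hsum_nonneg q.1)) htnn
    · rcases eq_or_lt_of_le (hsum_nonneg q.1) with hs | hs
      · have ht0 : ∑ k, ψ k q.1 * ind k q = 0 := le_antisymm (hs ▸ hts) htnn
        simp [hwdef, ht0]
      · calc (∑ k, ψ k q.1)⁻¹ * ∑ k, ψ k q.1 * ind k q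
            ≤ (∑ k, ψ k q.1)⁻¹ * ∑ k, ψ k q.1 :=
              mul_le_mul_of_nonneg_left hts (inv_nonneg.mpr (hsum_nonneg q.1))
          _ = 1 := inv_mul_cancel₀ hs.ne'
  -- the key pointwise identity : g * w = K⁻¹ * Σ ψ · 1
  have hkey : ∀ q : 𝒳 × 𝒴, g q.1 * w q = (K : ℝ)⁻¹ * ∑ k, ψ k q.1 * ind k q := by
    intro q
    rcases eq_or_ne (∑ k, ψ k q.1) 0 with hs | hs
    · have hz : ∀ k ∈ Finset.univ, ψ k q.1 = 0 :=
        (Finset.sum_eq_zero_iff_of_nonneg fun k _ => (hψ01 k q.1).1).mp hs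
      have ht0 : ∑ k, ψ k q.1 * ind k q = 0 :=
        Finset.sum_eq_zero fun k hk => by rw [hz k hk, zero_mul]
      simp [hgdef, hwdef, hs, ht0]
    · show ((K : ℝ)⁻¹ * ∑ k, ψ k q.1) * ((∑ k, ψ k q.1)⁻¹ * ∑ k, ψ k q.1 * ind k q) = _
      rw [mul_assoc, mul_inv_cancel_left₀ hs]
  -- integrability of the component functions
  have hψint : ∀ k : Fin K, Integrable (fun ω => ψ k (X ω)) P := fun k =>
    integrable_of_mem_Icc01 P ((hψm k).comp hX) fun ω => hψ01 k (X ω)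
  have hψindint : ∀ k : Fin K, Integrable (fun ω => ψ k (X ω) * ind k (X ω, Y ω)) P := by
    intro k
    refine integrable_of_mem_Icc01 P ?_ ?_
    · exact ((hψm k).comp hX).mul ((hind_m k).comp (hX.prodMk hY))
    · intro ω
      exact ⟨hterm_nonneg k (X ω, Y ω),
        le_trans (hterm_le k (X ω, Y ω)) (hψ01 k (X ω)).2⟩
  -- compute the two integrals
  have hIg : ∫ ω, g (X ω) ∂P = (K : ℝ)⁻¹ * ∑ k, ∫ ω, ψ k (X ω) ∂P := by
    rw [hgdef]
    simp only []
    rw [integral_const_mul _, integral_finset_sum _ fun k _ => hψint k]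
  have hIgw : ∫ ω, g (X ω) * w (X ω, Y ω) ∂P
      = (K : ℝ)⁻¹ * ∑ k, ∫ ω, ψ k (X ω) * ind k (X ω, Y ω) ∂P := by
    have : (fun ω => g (X ω) * w (X ω, Y ω))
        = fun ω => (K : ℝ)⁻¹ * ∑ k, ψ k (X ω) * ind k (X ω, Y ω) :=
      funext fun ω => hkey (X ω, Y ω)
    rw [this, integral_const_mul _, integral_finset_sum _ fun k _ => hψindint k]
  have hIgpos : 0 < ∫ ω, g (X ω) ∂P := by
    rw [hIg]; exact mul_pos hKinv_pos hpos
  have key := aux_cond P X Y U V hX hY hU hV hUnifU hUnifV hIndUV hInd g w hgm hwm hg01 hw01 hIgpos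
  refine key.trans (congrArg ENNReal.ofReal ?_)
  rw [hIg, hIgw, mul_div_mul_left _ _ (ne_of_gt hKinv_pos)]
end
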